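/- The binomial collection γ̃ defined by γ̃_{n,n'} = Σ_{j=0}^{n} C(n', j) e_{n'-j} for n' ∈ ℕ₊ and n ∈ {0, …, n'} satisfies the bound condition, i.e. γ̃ ∈ Γ. -/

import Mathlib

open Matrix

noncomputable def relu {n n' : ℕ} (W : Matrix (Fin n') (Fin n) ℝ) (b : Fin n' → ℝ)
    (x : Fin n → ℝ) : Fin n' → ℝ :=
  fun i => max 0 (W i ⬝ᵥ x + b i)

noncomputable def sig {n n' : ℕ} (W : Matrix (Fin n') (Fin n) ℝ) (b : Fin n' → ℝ)
    (x : Fin n → ℝ) : Fin n' → Bool :=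
  fun i => decide (0 < W i ⬝ᵥ x + b i)

/-- Forward pass through the first `l` layers: `fwd n W b l = h_l ∘ ⋯ ∘ h_1`. -/
noncomputable def fwd (n : ℕ → ℕ) (W : ∀ l : ℕ, Matrix (Fin (n (l + 1))) (Fin (n l)) ℝ)
    (b : ∀ l : ℕ, Fin (n (l + 1)) → ℝ) : (l : ℕ) → (Fin (n 0) → ℝ) → (Fin (n l) → ℝ)
  | 0 => fun x => x
  | l + 1 => fun x => relu (W l) (b l) (fwd n W b l x)

/-- Multi signature of length `m`:
`msig n W b m x = (S_{h_1}(x), S_{h_2}(h_1(x)), …, S_{h_m}(h_{m-1}∘⋯∘h_1(x)))`. -/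
noncomputable def msig (n : ℕ → ℕ) (W : ∀ l : ℕ, Matrix (Fin (n (l + 1))) (Fin (n l)) ℝ)
    (b : ∀ l : ℕ, Fin (n (l + 1)) → ℝ) (m : ℕ) (x : Fin (n 0) → ℝ) :
    ∀ l : Fin m, Fin (n (l.val + 1)) → Bool :=
  fun l => sig (W l.val) (b l.val) (fwd n W b l.val x)

/-- Number of active units of a binary vector `s`, i.e. `|s|`. -/
def cnt {k : ℕ} (s : Fin k → Bool) : ℕ := (Finset.univ.filter fun j => s j = true).card

/-- `min(n_0, |s_1|, …, |s_i|)` for a length-`i` multi signature `s`. -/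
def minAct (n : ℕ → ℕ) (i : ℕ) (s : ∀ l : Fin i, Fin (n (l.val + 1)) → Bool) : ℕ :=
  Finset.univ.fold min (n 0) (fun l : Fin i => cnt (s l))


/-- Tail sum `∑_{j ≥ J} v j` of a histogram. -/
noncomputable def tailSum (v : ℕ → ℕ) (J : ℕ) : ℕ :=
  ∑' j : ℕ, if J ≤ j then v j else 0

/-- The partial order `≼` on histograms: `v ≼ w` iff all tail sums of `v` are dominated by
those of `w`. -/
def hle (v w : ℕ → ℕ) : Prop := ∀ J : ℕ, tailSum v J ≤ tailSum w J

/-- The histogram `e_i` with a single entry `1` at index `i`. -/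
def histE (i : ℕ) : ℕ → ℕ := fun j => if j = i then 1 else 0

/-- The activation histogram `ℋ_{n'}(𝒮)`: entry `j` counts the signatures `s ∈ 𝒮` with
`|s| = j` active units. -/
noncomputable def actHist (n' : ℕ) (S : Set (Fin n' → Bool)) : ℕ → ℕ :=
  fun j => {s ∈ S | cnt s = j}.ncard

/-- The clipping function `cl_k`: all mass at indices `≥ k` is moved to index `k`. -/
noncomputable def clip (k : ℕ) (v : ℕ → ℕ) : ℕ → ℕ :=
  fun i => if i < k then v i else if i = k then tailSum v k else 0

/-- The bound condition for a collection `γ` (accessed as `γ n' n` for `n ≤ n'`, `n' ≥ 1`):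
every `γ n' n` is a histogram in `V` (finitely supported); for every ReLU layer function
`h ∈ RL(n, n')` with `0 ≤ n ≤ n'` the activation histogram of its attained signatures is
dominated by `γ n' n` (for `n = 0` the layer functions are the constants, with activation
histogram `e_0`); and `γ n' n ≼ γ n' m` whenever `n ≤ m ≤ n'`. -/
def BoundCondition (γ : ℕ → ℕ → ℕ → ℕ) : Prop :=
  (∀ n' n : ℕ, 0 < n' → n ≤ n' → (Function.support (γ n' n)).Finite) ∧
  (∀ n' : ℕ, 0 < n' → hle (histE 0) (γ n' 0)) ∧
  (∀ n n' : ℕ, 0 < n → 0 < n' → n ≤ n' →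
    ∀ (W : Matrix (Fin n') (Fin n) ℝ) (b : Fin n' → ℝ),
      hle (actHist n' (Set.range (sig W b))) (γ n' n)) ∧
  (∀ n' n m : ℕ, 0 < n' → n ≤ m → m ≤ n' → hle (γ n' n) (γ n' m))

/-- The transition function `φ^{(γ)}_{n'} : V → V`,
`v ↦ ∑_{m} v_m · cl_{min(m,n')}(γ_{min(m,n'), n'})`. -/
noncomputable def phi (γ : ℕ → ℕ → ℕ → ℕ) (n' : ℕ) (v : ℕ → ℕ) : ℕ → ℕ :=
  fun i => ∑' m : ℕ, v m * clip (min m n') (γ n' (min m n')) i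

/-- The dimension histogram `H̃^{(i)}(U)`: entry `j` counts the length-`i` multi signatures
`(s_1, …, s_i) ∈ U` with `min(n_0, |s_1|, …, |s_i|) = j`. -/
noncomputable def dimHist (n : ℕ → ℕ) (i : ℕ)
    (U : Set (∀ l : Fin i, Fin (n (l.val + 1)) → Bool)) : ℕ → ℕ :=
  fun j => {u ∈ U | minAct n i u = j}.ncard


/-- The binomial collection `γ̃_{n,n'} = ∑_{j=0}^{n} C(n', j) e_{n'-j}`
(accessed as `binomGamma n' n`). -/
def binomGamma (n' n : ℕ) : ℕ → ℕ :=
  fun i => ∑ j ∈ Finset.range (n + 1), if i = n' - j then n'.choose j else 0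

/-!
The tail sum of `γ̃_{n,n'}` at `J` is `∑ C(n', j)` over `j ≤ n` with `J ≤ n' - j`. For a layer
`x ↦ Wx + b` with `n` inputs, the sets of active units of attained signatures form a family of
VC dimension at most `n`: any `n + 1` rows `w_i` admit a nontrivial relation `∑ c_i w_i = 0`, so
`∑ c_i (⟨w_i, x⟩ + b_i)` does not depend on `x`, and the sign patterns of `c` and of `-c` cannot
both be attained. If `J + n ≤ n'` every term of the tail sum is present and Sauer–Shelah bounds
the number of all attained signatures; otherwise the tail sum is the number of all binary
vectors with at least `J` ones.
-/

open Finset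

section Histogram

lemma tailSum_eq_sum_Ico {v : ℕ → ℕ} {N : ℕ} (hv : ∀ j, N ≤ j → v j = 0) (J : ℕ) :
    tailSum v J = ∑ j ∈ Ico J N, v j := by
  rw [tailSum, tsum_eq_sum (s := Ico J N)]
  · exact sum_congr rfl fun j hj => if_pos (mem_Ico.1 hj).1
  · intro j hj
    split_ifs with hJ
    · exact hv j (by simpa [hJ] using hj)
    · rfl

lemma tailSum_histE_zero (J : ℕ) : tailSum (histE 0) J = if J = 0 then 1 else 0 := by
  rw [tailSum_eq_sum_Ico (v := histE 0) (N := 1) (fun j hj => if_neg (by omega))]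
  rcases J with _ | J <;> simp [histE]

lemma binomGamma_eq_zero {n' n i : ℕ} (hi : n' < i) : binomGamma n' n i = 0 :=
  sum_eq_zero fun _ _ => if_neg (by omega)

lemma tailSum_binomGamma (n' n J : ℕ) :
    tailSum (binomGamma n' n) J = ∑ j ∈ range (n + 1) with J ≤ n' - j, n'.choose j := by
  rw [tailSum_eq_sum_Ico (N := n' + 1) (fun i hi => binomGamma_eq_zero hi), sum_filter]
  unfold binomGamma
  rw [sum_comm]
  refine sum_congr rfl fun j _ => ?_
  rw [sum_ite_eq']
  simp

lemma histE_zero_hle_binomGamma (n' : ℕ) : hle (histE 0) (binomGamma n' 0) := by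
  intro J
  rw [tailSum_histE_zero, tailSum_binomGamma]
  rcases J with _ | J <;> simp

lemma binomGamma_hle_binomGamma {n m : ℕ} (n' : ℕ) (hnm : n ≤ m) :
    hle (binomGamma n' n) (binomGamma n' m) := by
  intro J
  rw [tailSum_binomGamma, tailSum_binomGamma]
  exact sum_le_sum_of_subset (filter_subset_filter _ (range_subset_range.2 (by omega)))

lemma cnt_le {k : ℕ} (s : Fin k → Bool) : cnt s ≤ k :=
  (card_filter_le _ _).trans (card_fin k).le

lemma actHist_coe_finset {n' : ℕ} (S : Finset (Fin n' → Bool)) (j : ℕ) :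
    actHist n' S j = #{s ∈ S | cnt s = j} := by
  rw [actHist, ← Set.ncard_coe_finset, coe_filter]
  rfl

lemma tailSum_actHist_coe_finset {n' : ℕ} (S : Finset (Fin n' → Bool)) (J : ℕ) :
    tailSum (actHist n' S) J = #{s ∈ S | J ≤ cnt s} := by
  have hvanish : ∀ j, n' + 1 ≤ j → actHist n' S j = 0 := fun j hj => by
    rw [actHist_coe_finset, card_eq_zero, filter_eq_empty_iff]
    exact fun s _ => by have := cnt_le s; omega
  rw [tailSum_eq_sum_Ico hvanish, card_eq_sum_card_fiberwise (f := cnt) (t := Ico J (n' + 1))]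
  · refine sum_congr rfl fun j hj => ?_
    rw [actHist_coe_finset, filter_filter]
    refine congrArg card (filter_congr fun s _ => ?_)
    have := mem_Ico.1 hj
    exact ⟨fun h => ⟨by omega, h⟩, And.right⟩
  · intro s hs
    have := cnt_le s
    simp only [coe_filter, Set.mem_ofPred_eq, coe_Ico, Set.mem_Ico] at hs ⊢
    omega

end Histogram

section SetFamily

variable {α : Type*} [Fintype α] [DecidableEq α]

lemma card_le_sum_choose_of_vcDim_le {𝒜 : Finset (Finset α)} {n : ℕ} (h𝒜 : 𝒜.vcDim ≤ n) :
    #𝒜 ≤ ∑ j ∈ range (n + 1), (Fintype.card α).choose j :=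
  calc #𝒜 ≤ #𝒜.shatterer := card_le_card_shatterer 𝒜
    _ ≤ ∑ k ∈ Iic 𝒜.vcDim, (Fintype.card α).choose k := card_shatterer_le_sum_vcDim
    _ = ∑ j ∈ range (𝒜.vcDim + 1), (Fintype.card α).choose j := by rw [Nat.range_succ_eq_Iic]
    _ ≤ ∑ j ∈ range (n + 1), (Fintype.card α).choose j :=
      sum_le_sum_of_subset (range_subset_range.2 (by omega))

lemma card_filter_le_card_le_sum_Icc_choose (J : ℕ) :
    #{A : Finset α | J ≤ #A} ≤ ∑ m ∈ Icc J (Fintype.card α), (Fintype.card α).choose m := by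
  simp_rw [← card_univ, ← card_powersetCard]
  refine (card_le_card fun A hA => mem_biUnion.2 ⟨#A, ?_⟩).trans card_biUnion_le
  exact ⟨mem_Icc.2 ⟨(mem_filter.1 hA).2, card_le_univ A⟩, mem_powersetCard_univ.2 rfl⟩

lemma sum_Icc_choose_eq_sum_filter_range {N n J : ℕ} (hnN : n ≤ N) (hJ : N < n + J) :
    ∑ m ∈ Icc J N, N.choose m = ∑ j ∈ range (n + 1) with J ≤ N - j, N.choose j := by
  refine sum_nbij' (fun m => N - m) (fun j => N - j) ?_ ?_ ?_ ?_
    fun m hm => (Nat.choose_symm (mem_Icc.1 hm).2).symm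
  all_goals
    intro m hm
    simp only [mem_Icc, mem_filter, mem_range] at hm ⊢
    omega

lemma card_filter_le_card_le_sum_choose_of_vcDim_le {𝒜 : Finset (Finset α)} {n : ℕ}
    (hn : n ≤ Fintype.card α) (h𝒜 : 𝒜.vcDim ≤ n) (J : ℕ) :
    #{A ∈ 𝒜 | J ≤ #A} ≤ ∑ j ∈ range (n + 1) with J ≤ Fintype.card α - j,
      (Fintype.card α).choose j := by
  by_cases hJ : n + J ≤ Fintype.card α
  · rw [filter_true_of_mem (s := range (n + 1)) fun j hj => by have := mem_range.1 hj; omega]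
    exact (card_filter_le _ _).trans (card_le_sum_choose_of_vcDim_le h𝒜)
  · rw [← sum_Icc_choose_eq_sum_filter_range hn (by omega)]
    exact (card_le_card (filter_subset_filter _ (subset_univ 𝒜))).trans
      (card_filter_le_card_le_sum_Icc_choose J)

end SetFamily

section SignPattern

lemma mul_nonneg_of_pos_iff_pos {c y : ℝ} (h : 0 < y ↔ 0 < c) : 0 ≤ c * y := by
  by_cases hc : 0 < c
  · exact (mul_pos hc (h.2 hc)).le
  · exact mul_nonneg_of_nonpos_of_nonpos (not_lt.1 hc) (not_lt.1 (mt h.1 hc))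

lemma sum_mul_pos_of_pos_iff_pos {ι : Type*} {t : Finset ι} {c y : ι → ℝ}
    (h : ∀ i ∈ t, (0 < y i ↔ 0 < c i)) {i₀ : ι} (hi₀ : i₀ ∈ t) (hc : 0 < c i₀) :
    0 < ∑ i ∈ t, c i * y i :=
  sum_pos' (fun i hi => mul_nonneg_of_pos_iff_pos (h i hi))
    ⟨i₀, hi₀, mul_pos hc ((h i₀ hi₀).2 hc)⟩

theorem not_forall_exists_sign_pattern_of_lt_card {ι : Type*} {n : ℕ} (W : ι → Fin n → ℝ)
    (b : ι → ℝ) {t : Finset ι} (ht : n < #t) :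
    ¬ ∀ u ⊆ t, ∃ x : Fin n → ℝ, ∀ i ∈ t, (0 < W i ⬝ᵥ x + b i ↔ i ∈ u) := by
  classical
  intro hall
  have hdep : ¬ LinearIndepOn ℝ W (t : Set ι) := fun h => by
    have := h.fintype_card_le_finrank
    simp only [Finset.coe_sort_coe, Fintype.card_coe, Module.finrank_fin_fun] at this
    omega
  obtain ⟨c, hc, i₀, hi₀, hci₀⟩ := not_linearIndepOn_finset_iff.1 hdep
  obtain ⟨c, hc, hpos⟩ : ∃ c : ι → ℝ, ∑ i ∈ t, c i • W i = 0 ∧ 0 < c i₀ := by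
    rcases hci₀.lt_or_gt with hneg | hpos
    · exact ⟨-c, by simp [neg_smul, sum_neg_distrib, hc], by simpa using hneg⟩
    · exact ⟨c, hc, hpos⟩
  have hconst : ∀ x, ∑ i ∈ t, c i * (W i ⬝ᵥ x + b i) = ∑ i ∈ t, c i * b i := by
    intro x
    have hlin : ∑ i ∈ t, c i * (W i ⬝ᵥ x) = (∑ i ∈ t, c i • W i) ⬝ᵥ x := by
      simp [sum_dotProduct, smul_dotProduct]
    simp [mul_add, sum_add_distrib, hlin, hc]
  -- The pattern of `c` makes every term of the constant sum nonnegative and one positive,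
  -- the pattern of `-c` makes every term nonpositive.
  obtain ⟨xpos, hxpos⟩ := hall {i ∈ t | 0 < c i} (filter_subset _ _)
  obtain ⟨xneg, hxneg⟩ := hall {i ∈ t | 0 < -c i} (filter_subset _ _)
  have hpos_sum : 0 < ∑ i ∈ t, c i * (W i ⬝ᵥ xpos + b i) :=
    sum_mul_pos_of_pos_iff_pos (fun i hi => by simp [hxpos i hi, hi]) hi₀ hpos
  have hneg_sum : 0 ≤ ∑ i ∈ t, -c i * (W i ⬝ᵥ xneg + b i) :=
    sum_nonneg fun i hi => mul_nonneg_of_pos_iff_pos (by simp [hxneg i hi, hi])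
  rw [hconst] at hpos_sum
  simp only [neg_mul, sum_neg_distrib, hconst] at hneg_sum
  linarith

end SignPattern

section Signature

def activeSet {k : ℕ} (s : Fin k → Bool) : Finset (Fin k) := {i | s i = true}

lemma activeSet_injective (k : ℕ) : Function.Injective (activeSet (k := k)) := by
  intro s s' h
  funext i
  simpa [activeSet] using congrArg (i ∈ ·) h

lemma card_filter_le_cnt_eq_image_activeSet {k : ℕ} (S : Finset (Fin k → Bool)) (J : ℕ) :
    #{s ∈ S | J ≤ cnt s} = #{A ∈ S.image activeSet | J ≤ #A} := by
  rw [filter_image, card_image_of_injective _ (activeSet_injective k)]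
  rfl

lemma vcDim_image_activeSet_le {n n' : ℕ} (W : Matrix (Fin n') (Fin n) ℝ) (b : Fin n' → ℝ)
    {S : Finset (Fin n' → Bool)} (hS : ∀ s ∈ S, s ∈ Set.range (sig W b)) :
    (S.image activeSet).vcDim ≤ n := by
  refine Finset.sup_le fun t ht => not_lt.1 fun hnt =>
    not_forall_exists_sign_pattern_of_lt_card W b hnt fun u hu => ?_
  obtain ⟨A, hA, htA⟩ := mem_shatterer.1 ht hu
  obtain ⟨s, hs, rfl⟩ := mem_image.1 hA
  obtain ⟨x, rfl⟩ := hS s hs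
  refine ⟨x, fun i hi => ?_⟩
  rw [← htA]
  simp [activeSet, sig, hi]

theorem actHist_range_sig_hle_binomGamma {n n' : ℕ} (hnn' : n ≤ n')
    (W : Matrix (Fin n') (Fin n) ℝ) (b : Fin n' → ℝ) :
    hle (actHist n' (Set.range (sig W b))) (binomGamma n' n) := by
  intro J
  have hfin := Set.toFinite (Set.range (sig W b))
  rw [← hfin.coe_toFinset, tailSum_actHist_coe_finset, tailSum_binomGamma,
    card_filter_le_cnt_eq_image_activeSet]
  simpa using card_filter_le_card_le_sum_choose_of_vcDim_le (by simpa using hnn')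
    (vcDim_image_activeSet_le W b (S := hfin.toFinset) (by simp)) J

end Signature

/-- The binomial collection `γ̃` satisfies the bound condition, i.e. `γ̃ ∈ Γ`. -/
theorem stmt16 : BoundCondition binomGamma :=
  ⟨fun n' _ _ _ => (Set.finite_Iic n').subset fun _ hi => not_lt.1 (mt binomGamma_eq_zero hi),
    fun n' _ => histE_zero_hle_binomGamma n',
    fun _ _ _ _ hnn' => actHist_range_sig_hle_binomGamma hnn',
    fun n' _ _ _ hnm _ => binomGamma_hle_binomGamma n' hnm⟩
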